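/- arXiv:2104.15031 — 4 statements merged into one kernel-verified Lean document; each statement's English description precedes it below -/
import Mathlib

section
/- Let κ be a regular uncountable cardinal, ⟨C_α | α < κ⟩ a C-sequence, and α < β < κ with α > 0. Define last(α,β) := α if λ(α,β) < α, and last(α,β) := min(im(tr(α,β))) otherwise. Then: (1) λ(last(α,β), β) < α (with the convention λ(δ,δ):=0); (2) if last(α,β) ≠ α, then α ∈ acc(C_{last(α,β)}); (3) tr(last(α,β), β) is an initial segment of tr(α,β). -/
open Cardinal Ordinal Set

noncomputable section

/-- The order type of a set of ordinals. -/
def otp (s : Set Ordinal) : Ordinal := Ordinal.type ((· < ·) : s → s → Prop)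

/-- `a < b` for sets of ordinals: every element of `a` is below every element of `b`. -/
def SetLT (a b : Set Ordinal.{0}) : Prop := ∀ α ∈ a, ∀ β ∈ b, α < β

/-- `A` is a pairwise disjoint subfamily of `[κ]^σ`:
a family of subsets of (ordinals below) `κ` of order type `σ`, pairwise disjoint. -/
def IsFamily (κ σ : Ordinal.{0}) (A : Set (Set Ordinal)) : Prop :=
  (∀ a ∈ A, a ⊆ Set.Iio κ ∧ otp a = Ordinal.lift.{1} σ) ∧ A.PairwiseDisjoint id

/-- Shelah's principle `Pr₁(κ, κ, θ, χ)`. -/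
def Pr1 (κ θ χ : Cardinal.{0}) : Prop :=
  ∃ c : Ordinal → Ordinal → Ordinal,
    (∀ α β : Ordinal, α < β → β < κ.ord → c α β < θ.ord) ∧
    ∀ σ : Ordinal, σ < χ.ord → ∀ A : Set (Set Ordinal),
      IsFamily κ.ord σ A → #A = Cardinal.lift.{1} κ →
      ∀ τ : Ordinal, τ < θ.ord →
        ∃ a ∈ A, ∃ b ∈ A, SetLT a b ∧ ∀ α ∈ a, ∀ β ∈ b, c α β = τ
/-- `D` is a club (closed unbounded set) in `κ`. -/
def ClubIn (D : Set Ordinal.{0}) (κ : Ordinal.{0}) : Prop :=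
  D ⊆ Set.Iio κ ∧ (∀ α < κ, ∃ β ∈ D, α ≤ β) ∧
    ∀ δ < κ, 0 < δ → (∀ γ < δ, ∃ x ∈ D, γ < x ∧ x < δ) → δ ∈ D

/-- `S` is a stationary subset of `κ`. -/
def StatIn (S : Set Ordinal.{0}) (κ : Ordinal.{0}) : Prop :=
  S ⊆ Set.Iio κ ∧ ∀ D : Set Ordinal, ClubIn D κ → (S ∩ D).Nonempty

/-- `δ` is an accumulation point belonging to `s`, i.e. `δ ∈ acc(s)`:
`δ ∈ s` and `sup(s ∩ δ) = δ > 0`. -/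
def IsAccOf (s : Set Ordinal.{0}) (δ : Ordinal.{0}) : Prop :=
  δ ∈ s ∧ 0 < δ ∧ ∀ γ < δ, ∃ x ∈ s, γ < x ∧ x < δ

/-- `C` is a C-sequence over `κ`: each `C α` is a closed subset of `α`
with `sup (C α) = sup α`. -/
def IsCSeq (κ : Ordinal.{0}) (C : Ordinal.{0} → Set Ordinal.{0}) : Prop :=
  (∀ α < κ, C α ⊆ Set.Iio α) ∧
  (∀ α < κ, ∀ δ, 0 < δ → δ < α → (∀ γ < δ, ∃ x ∈ C α, γ < x ∧ x < δ) → δ ∈ C α) ∧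
  (∀ α < κ, ∀ γ : Ordinal, (∀ x ∈ C α, x ≤ γ) → ∀ δ < α, δ ≤ γ)

/-- The upper trace of the walk from `β` down to `α` along the C-sequence `C`. -/
def Tr (C : Ordinal.{0} → Set Ordinal.{0}) (α β : Ordinal.{0}) : ℕ → Ordinal.{0}
  | 0 => β
  | n + 1 => if α < Tr C α β n then sInf (C (Tr C α β n) ∩ Set.Ici α) else α

/-- The length `ρ₂(α,β)` of the walk from `β` down to `α`. -/
def rho2 (C : Ordinal.{0} → Set Ordinal.{0}) (α β : Ordinal.{0}) : ℕ :=
  sInf {n | Tr C α β n = α}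

/-- The (finite) trace `tr(α,β)` of the walk, as a list. -/
def trL (C : Ordinal.{0} → Set Ordinal.{0}) (α β : Ordinal.{0}) : List Ordinal.{0} :=
  (List.range (rho2 C α β)).map (Tr C α β)

/-- `λ(α,β) = max_{i<ρ₂(α,β)} sup (C_{Tr(α,β)(i)} ∩ α)`. -/
def lamb (C : Ordinal.{0} → Set Ordinal.{0}) (α β : Ordinal.{0}) : Ordinal.{0} :=
  (Finset.range (rho2 C α β)).sup fun i => sSup (C (Tr C α β i) ∩ Set.Iio α)

/-- `η_{α,β} := min { n < ω ∣ η ∈ C_{Tr(α,β)(n)} or n = ρ₂(α,β) } + 1`. -/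
def etaIdx (C : Ordinal.{0} → Set Ordinal.{0}) (η α β : Ordinal.{0}) : ℕ :=
  sInf {n | η ∈ C (Tr C α β n) ∨ n = rho2 C α β} + 1

/-- The transformation principle `Pℓ₁(κ, θ, χ)`. -/
def Pl1 (κ θ χ : Cardinal.{0}) : Prop :=
  ∃ t : Ordinal.{0} → Ordinal.{0} → Ordinal.{0} × Ordinal.{0} × Ordinal.{0},
    (∀ α β : Ordinal, α < β → β < κ.ord →
      (t α β).1 ≤ (t α β).2.1 ∧ (t α β).2.1 ≤ α ∧ α < (t α β).2.2 ∧ (t α β).2.2 ≤ β) ∧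
    ∀ σ : Ordinal, σ < χ.ord → ∀ A : Set (Set Ordinal),
      IsFamily κ.ord σ A → #A = Cardinal.lift.{1} κ →
      ∃ S : Set Ordinal, StatIn S κ.ord ∧
        ∀ αs ∈ S, ∀ βs ∈ S, αs < βs →
          ∀ τ : Ordinal, τ < θ.ord → τ < αs →
            ∃ a ∈ A, ∃ b ∈ A, SetLT a b ∧
              ∀ α ∈ a, ∀ β ∈ b, t α β = (τ, αs, βs)

/-- The transformation principle `Pℓ₂(κ, Γ, χ)`. -/
def Pl2 (κ : Cardinal.{0}) (Γ : Set Ordinal.{0}) (χ : Cardinal.{0}) : Prop :=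
  ∃ t : Ordinal.{0} → Ordinal.{0} → Ordinal.{0} × Ordinal.{0},
    (∀ α β : Ordinal, α < β → β < κ.ord →
      (t α β).1 ≤ α ∧ α < (t α β).2 ∧ (t α β).2 ≤ β) ∧
    ∀ σ : Ordinal, σ < χ.ord → ∀ A : Set (Set Ordinal),
      IsFamily κ.ord σ A → #A = Cardinal.lift.{1} κ →
      ∃ D : Set Ordinal, ClubIn D κ.ord ∧
        ∀ αs ∈ Γ ∩ D, ∀ βs ∈ Γ ∩ D, αs < βs →
          ∃ a ∈ A, ∃ b ∈ A, SetLT a b ∧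
            ∀ α ∈ a, ∀ β ∈ b, t α β = (αs, βs)

/-- The principle `Pr₁⁺(κ, θ, χ)`. -/
def Pr1plus (κ θ χ : Cardinal.{0}) : Prop :=
  ∃ o : Ordinal.{0} → Ordinal.{0} → Ordinal.{0},
    (∀ α β : Ordinal, 0 < α → α < β → β < κ.ord → o α β < α ∧ o α β < θ.ord) ∧
    ∀ ζ : Ordinal, ζ < θ.ord → ∀ σ : Ordinal, σ < χ.ord →
      ∀ A : Set (Set Ordinal), IsFamily κ.ord σ A → #A = Cardinal.lift.{1} κ →
        ∃ γ < κ.ord, ∀ b : Set Ordinal,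
          b ⊆ Set.Iio κ.ord → b ⊆ Set.Ici γ → otp b = Ordinal.lift.{1} σ →
          ∃ a ∈ A, a ⊆ Set.Iio γ ∧ ∀ α ∈ a, ∀ β ∈ b, o α β = ζ

/-- The oscillation principle `Pℓ₆(κ, χ)`. -/
def Pl6 (κ χ : Cardinal.{0}) : Prop :=
  ∃ d : List Ordinal.{0} → ℕ,
    ∀ (u v : Ordinal.{0} → Set (List Ordinal.{0}))
      (s : Ordinal.{0} → List Ordinal.{0}) (φ : Ordinal.{0} → Ordinal.{0}),
      (∃ ε < κ.ord, ∀ α : Ordinal, ε ≤ α → α < κ.ord → φ α < α) →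
      (∀ α < κ.ord, (u α).Nonempty ∧ #(u α) < Cardinal.lift.{1} χ ∧
        ∀ ϱ ∈ u α, (∀ x ∈ ϱ, x < κ.ord) ∧ α ∈ ϱ) →
      (∀ α < κ.ord, (v α).Nonempty ∧ #(v α) < Cardinal.lift.{1} χ ∧
        ∀ σl ∈ v α, (∀ x ∈ σl, x < κ.ord) ∧ (s α ++ [α]) <+: σl) →
      ∃ α β : Ordinal, α < β ∧ β < κ.ord ∧ φ α = φ β ∧
        ∀ ϱ ∈ u α, ∀ σl ∈ v β, d (ϱ ++ σl) = ϱ.length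

/-- Shelah's principle `Pr₆(κ, κ, θ, χ)`. -/
def Pr6 (κ θ χ : Cardinal.{0}) : Prop :=
  ∃ d : List Ordinal.{0} → Ordinal.{0},
    (∀ l, d l < θ.ord) ∧
    ∀ τ : Ordinal, τ < θ.ord → ∀ E : Set Ordinal, ClubIn E κ.ord →
      ∀ u v : Ordinal.{0} → Set (List Ordinal.{0}),
        (∀ α ∈ E, (u α).Nonempty ∧ #(u α) < Cardinal.lift.{1} χ ∧
          ∀ ϱ ∈ u α, (∀ x ∈ ϱ, x < κ.ord) ∧ α ∈ ϱ) →
        (∀ α ∈ E, (v α).Nonempty ∧ #(v α) < Cardinal.lift.{1} χ ∧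
          ∀ σl ∈ v α, (∀ x ∈ σl, x < κ.ord) ∧ α ∈ σl) →
        ∃ α ∈ E, ∃ β ∈ E, α < β ∧
          ∀ ϱ ∈ u α, ∀ σl ∈ v β, d (ϱ ++ σl) = τ

/-- The square principle `□(κ)`. -/
def SquarePrin (κ : Ordinal.{0}) : Prop :=
  ∃ C : Ordinal.{0} → Set Ordinal.{0},
    (∀ α < κ, C α ⊆ Set.Iio α) ∧
    (∀ α < κ, Order.IsSuccLimit α →
      (∀ γ < α, ∃ x ∈ C α, γ < x) ∧
      (∀ δ < α, 0 < δ → (∀ γ < δ, ∃ x ∈ C α, γ < x ∧ x < δ) → δ ∈ C α)) ∧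
    (∀ α < κ, ∀ δ, IsAccOf (C α) δ → C α ∩ Set.Iio δ = C δ) ∧
    ¬ ∃ D : Set Ordinal, ClubIn D κ ∧ ∀ δ, IsAccOf D δ → D ∩ Set.Iio δ = C δ

/-- The stick principle `⫯(κ)` (with witnesses of size `μ`). -/
def Stick (κ μ : Cardinal.{0}) : Prop :=
  ∃ X : Ordinal.{0} → Set Ordinal.{0},
    (∀ γ < κ.ord, X γ ⊆ Set.Iio κ.ord) ∧
    ∀ Y : Set Ordinal, Y ⊆ Set.Iio κ.ord → #Y = Cardinal.lift.{1} κ →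
      ∃ γ < κ.ord, X γ ⊆ Y ∧ #(X γ) = Cardinal.lift.{1} μ

/-- A filter is `λ`-complete: it is closed under intersections of fewer than `λ` sets. -/
def FilterComplete (lam : Cardinal.{0}) {α : Type 1} (F : Filter α) : Prop :=
  ∀ ι : Type 1, #ι < Cardinal.lift.{1} lam →
    ∀ f : ι → Set α, (∀ i, f i ∈ F) → (⋂ i, f i) ∈ F

/-- `lam` is a strongly compact cardinal: every `lam`-complete (proper) filter
extends to a `lam`-complete ultrafilter. -/
def IsStronglyCompact (lam : Cardinal.{0}) : Prop :=
  ∀ (α : Type 1) (F : Filter α), F.NeBot → FilterComplete lam F →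
    ∃ U : Ultrafilter α, (↑U : Filter α) ≤ F ∧ FilterComplete lam (↑U : Filter α)

/-- `last(α,β)`: `α` if `λ(α,β) < α`, and otherwise `min(im(tr(α,β)))`. -/
def lastStep (C : Ordinal.{0} → Set Ordinal.{0}) (α β : Ordinal.{0}) : Ordinal.{0} :=
  if lamb C α β < α then α else sInf {x | ∃ i < rho2 C α β, Tr C α β i = x}

/-!
Along the walk from `β` down to `α` the trace strictly decreases, and `sSup (C_{Tr i} ∩ α) = α`
forces `α ∈ C_{Tr i}` by closedness, hence `Tr (i + 1) = α`. So if `λ(α,β) = α`, the maximum is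
attained only at the last step `i = ρ₂(α,β) - 1`, and `last(α,β) = Tr i`. Walking from `β` to any
trace point `Tr i` retraces the first `i` steps of the walk to `α`, because each `Tr (j + 1)` is
still the least point of `C_{Tr j}` above `Tr i`; moreover no point of `C_{Tr j}` lies in
`[α, Tr i)`, so the `λ`-terms of the shorter walk are exactly the earlier ones, all below `α`.
-/

theorem csInf_inter_Ici_eq_of_le {γ : Type*} [ConditionallyCompleteLinearOrder γ]
    [WellFoundedLT γ] {s : Set γ} {a b : γ} (hne : (s ∩ Ici a).Nonempty) (hab : a ≤ b)
    (hb : b ≤ sInf (s ∩ Ici a)) : sInf (s ∩ Ici b) = sInf (s ∩ Ici a) := by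
  apply IsLeast.csInf_eq
  exact ⟨⟨(csInf_mem hne).1, hb⟩,
    fun _ hx => csInf_le ⟨a, fun _ hy => hy.2⟩ ⟨hx.1, hab.trans hx.2⟩⟩

theorem List.range_prefix_range {i n : ℕ} (h : i ≤ n) : List.range i <+: List.range n := by
  simpa [List.take_range, h] using List.take_prefix i (List.range n)

section Walk

variable {κ : Ordinal.{0}} {C : Ordinal.{0} → Set Ordinal.{0}} {α β γ : Ordinal.{0}} {i j : ℕ}

theorem Tr_succ_of_lt (h : α < Tr C α β i) :
    Tr C α β (i + 1) = sInf (C (Tr C α β i) ∩ Ici α) := by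
  rw [Tr, if_pos h]

theorem Tr_succ_eq_of_mem (h : α < Tr C α β i) (hα : α ∈ C (Tr C α β i)) :
    Tr C α β (i + 1) = α := by
  rw [Tr_succ_of_lt h]
  exact IsLeast.csInf_eq ⟨⟨hα, le_refl α⟩, fun _ hx => hx.2⟩

theorem rho2_le (h : Tr C α β i = α) : rho2 C α β ≤ i :=
  Nat.sInf_le h

theorem IsCSeq.isAccOf (hC : IsCSeq κ C) (hγ : γ < κ) (hαγ : α < γ) (h0 : 0 < α)
    (h : ∀ δ < α, ∃ x ∈ C γ, δ < x ∧ x < α) : IsAccOf (C γ) α :=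
  ⟨hC.2.1 γ hγ α h0 hαγ h, h0, h⟩

theorem IsCSeq.isAccOf_of_sSup_eq (hC : IsCSeq κ C) (hγ : γ < κ) (hαγ : α < γ) (h0 : 0 < α)
    (hsup : sSup (C γ ∩ Iio α) = α) : IsAccOf (C γ) α :=
  hC.isAccOf hγ hαγ h0 fun δ hδ => by
    obtain ⟨x, hx, hδx⟩ := exists_lt_of_lt_csSup' (hsup ▸ hδ)
    exact ⟨x, hx.1, hδx, hx.2⟩

theorem IsCSeq.inter_Ici_nonempty (hC : IsCSeq κ C) (hγ : γ < κ) (hαγ : α < γ) (h0 : 0 < α) :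
    (C γ ∩ Ici α).Nonempty := by
  by_contra hemp
  have hlt : ∀ x ∈ C γ, x < α := fun x hx => not_le.1 fun hle => hemp ⟨x, hx, hle⟩
  -- `C γ` is unbounded in `γ > α`, so if it stays below `α` it accumulates at `α`
  refine hemp ⟨α, (hC.isAccOf hγ hαγ h0 fun δ hδ => ?_).1, le_refl α⟩
  by_contra! h
  refine hδ.not_ge (hC.2.2 γ hγ δ (fun x hx => ?_) α hαγ)
  exact not_lt.1 fun hδx => (h x hx hδx).not_gt (hlt x hx)

theorem IsCSeq.Tr_mem_Icc (hC : IsCSeq κ C) (h0 : 0 < α) (hαβ : α ≤ β) (hβ : β < κ) :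
    ∀ i, Tr C α β i ∈ Icc α β
  | 0 => ⟨hαβ, le_rfl⟩
  | i + 1 => by
    have ih := hC.Tr_mem_Icc h0 hαβ hβ i
    by_cases h : α < Tr C α β i
    · rw [Tr_succ_of_lt h]
      have hmem := csInf_mem (hC.inter_Ici_nonempty (ih.2.trans_lt hβ) h h0)
      exact ⟨hmem.2, (hC.1 _ (ih.2.trans_lt hβ) hmem.1).le.trans ih.2⟩
    · rw [Tr, if_neg h]
      exact ⟨le_rfl, hαβ⟩

theorem IsCSeq.Tr_lt (hC : IsCSeq κ C) (h0 : 0 < α) (hαβ : α ≤ β) (hβ : β < κ) (i : ℕ) :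
    Tr C α β i < κ :=
  (hC.Tr_mem_Icc h0 hαβ hβ i).2.trans_lt hβ

theorem IsCSeq.Tr_succ_mem (hC : IsCSeq κ C) (h0 : 0 < α) (hαβ : α ≤ β) (hβ : β < κ)
    (h : α < Tr C α β i) : Tr C α β (i + 1) ∈ C (Tr C α β i) ∩ Ici α := by
  rw [Tr_succ_of_lt h]
  exact csInf_mem (hC.inter_Ici_nonempty (hC.Tr_lt h0 hαβ hβ i) h h0)

theorem IsCSeq.Tr_succ_lt (hC : IsCSeq κ C) (h0 : 0 < α) (hαβ : α ≤ β) (hβ : β < κ)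
    (h : α < Tr C α β i) : Tr C α β (i + 1) < Tr C α β i :=
  hC.1 _ (hC.Tr_lt h0 hαβ hβ i) (hC.Tr_succ_mem h0 hαβ hβ h).1

theorem IsCSeq.lt_Tr_of_lt_rho2 (hC : IsCSeq κ C) (h0 : 0 < α) (hαβ : α ≤ β) (hβ : β < κ)
    (hi : i < rho2 C α β) : α < Tr C α β i :=
  (hC.Tr_mem_Icc h0 hαβ hβ i).1.lt_of_ne fun h => Nat.notMem_of_lt_sInf hi h.symm

theorem IsCSeq.Tr_strictAntiOn (hC : IsCSeq κ C) (h0 : 0 < α) (hαβ : α ≤ β) (hβ : β < κ) :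
    StrictAntiOn (Tr C α β) (Iic (rho2 C α β)) :=
  strictAntiOn_Iic_of_succ_lt fun _ hm =>
    hC.Tr_succ_lt h0 hαβ hβ (hC.lt_Tr_of_lt_rho2 h0 hαβ hβ hm)

theorem IsCSeq.Tr_Tr (hC : IsCSeq κ C) (h0 : 0 < α) (hαβ : α ≤ β) (hβ : β < κ)
    (hi : i ≤ rho2 C α β) : ∀ j ≤ i, Tr C (Tr C α β i) β j = Tr C α β j
  | 0, _ => rfl
  | j + 1, hj => by
    have anti := hC.Tr_strictAntiOn h0 hαβ hβ
    have ih := hC.Tr_Tr h0 hαβ hβ hi j (by omega)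
    have hlt : Tr C α β i < Tr C α β j := anti (mem_Iic.2 (by omega)) hi (by omega)
    have hαj := hC.lt_Tr_of_lt_rho2 h0 hαβ hβ (i := j) (by omega)
    rw [Tr_succ_of_lt (ih ▸ hlt), ih, Tr_succ_of_lt hαj]
    refine csInf_inter_Ici_eq_of_le
      (hC.inter_Ici_nonempty (hC.Tr_lt h0 hαβ hβ j) hαj h0)
      (hC.Tr_mem_Icc h0 hαβ hβ i).1 ?_
    rw [← Tr_succ_of_lt hαj]
    exact anti.antitoneOn (mem_Iic.2 (by omega)) hi hj

theorem IsCSeq.rho2_Tr (hC : IsCSeq κ C) (h0 : 0 < α) (hαβ : α ≤ β) (hβ : β < κ)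
    (hi : i ≤ rho2 C α β) : rho2 C (Tr C α β i) β = i := by
  refine le_antisymm (rho2_le (hC.Tr_Tr h0 hαβ hβ hi i le_rfl)) (not_lt.1 fun hlt => ?_)
  have hmem : Tr C (Tr C α β i) β (rho2 C (Tr C α β i) β) = Tr C α β i :=
    Nat.sInf_mem (s := {n | Tr C (Tr C α β i) β n = Tr C α β i})
      ⟨i, hC.Tr_Tr h0 hαβ hβ hi i le_rfl⟩
  rw [hC.Tr_Tr h0 hαβ hβ hi _ hlt.le] at hmem
  exact (hC.Tr_strictAntiOn h0 hαβ hβ (mem_Iic.2 (by omega)) hi hlt).ne' hmem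

theorem IsCSeq.trL_Tr_prefix (hC : IsCSeq κ C) (h0 : 0 < α) (hαβ : α ≤ β) (hβ : β < κ)
    (hi : i ≤ rho2 C α β) : trL C (Tr C α β i) β <+: trL C α β := by
  have htr : trL C (Tr C α β i) β = (List.range i).map (Tr C α β) := by
    rw [trL, hC.rho2_Tr h0 hαβ hβ hi]
    exact List.map_congr_left fun j hj => hC.Tr_Tr h0 hαβ hβ hi j (List.mem_range.1 hj).le
  rw [htr, trL]
  exact (List.range_prefix_range hi).map _

theorem IsCSeq.inter_Iio_Tr (hC : IsCSeq κ C) (h0 : 0 < α) (hαβ : α ≤ β) (hβ : β < κ)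
    (hj : j < i) (hi : i ≤ rho2 C α β) :
    C (Tr C α β j) ∩ Iio (Tr C α β i) = C (Tr C α β j) ∩ Iio α := by
  have hαi := (hC.Tr_mem_Icc h0 hαβ hβ i).1
  refine subset_antisymm (fun x ⟨hxC, hxi⟩ => ⟨hxC, ?_⟩)
    (inter_subset_inter_right _ (Iio_subset_Iio hαi))
  rw [mem_Iio]
  by_contra! hαx
  refine (mem_Iio.1 hxi).not_ge ?_
  have hαj := hC.lt_Tr_of_lt_rho2 h0 hαβ hβ (i := j) (by omega)
  calc Tr C α β i ≤ Tr C α β (j + 1) :=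
        (hC.Tr_strictAntiOn h0 hαβ hβ).antitoneOn (mem_Iic.2 (by omega)) hi hj
    _ ≤ x := Tr_succ_of_lt hαj ▸ csInf_le' ⟨hxC, hαx⟩

theorem IsCSeq.sSup_inter_Iio_lt (hC : IsCSeq κ C) (h0 : 0 < α) (hαβ : α ≤ β) (hβ : β < κ)
    (hj : j + 1 < rho2 C α β) : sSup (C (Tr C α β j) ∩ Iio α) < α := by
  have hαj := hC.lt_Tr_of_lt_rho2 h0 hαβ hβ (i := j) (by omega)
  refine (csSup_le' fun _ hx => hx.2.le).lt_of_ne fun hsup => hj.not_ge (rho2_le ?_)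
  exact Tr_succ_eq_of_mem hαj
    (hC.isAccOf_of_sSup_eq (hC.Tr_lt h0 hαβ hβ j) hαj h0 hsup).1

theorem IsCSeq.lamb_Tr_lt (hC : IsCSeq κ C) (h0 : 0 < α) (hαβ : α ≤ β) (hβ : β < κ)
    (hi : i < rho2 C α β) : lamb C (Tr C α β i) β < α := by
  rw [lamb, hC.rho2_Tr h0 hαβ hβ hi.le, Finset.sup_lt_iff h0]
  intro j hj
  have hj : j < i := Finset.mem_range.1 hj
  rw [hC.Tr_Tr h0 hαβ hβ hi.le j hj.le, hC.inter_Iio_Tr h0 hαβ hβ hj hi.le]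
  exact hC.sSup_inter_Iio_lt h0 hαβ hβ (by omega)

theorem IsCSeq.exists_isAccOf_of_not_lamb_lt (hC : IsCSeq κ C) (h0 : 0 < α) (hαβ : α ≤ β)
    (hβ : β < κ) (hlamb : ¬lamb C α β < α) :
    ∃ i, i + 1 = rho2 C α β ∧ IsAccOf (C (Tr C α β i)) α := by
  have hne : (Finset.range (rho2 C α β)).Nonempty :=
    Finset.nonempty_iff_ne_empty.2 fun he => hlamb (by rw [lamb, he, Finset.sup_empty]; exact h0)
  obtain ⟨i, hi, hsup⟩ := Finset.exists_mem_eq_sup _ hne fun i => sSup (C (Tr C α β i) ∩ Iio α)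
  have hi : i < rho2 C α β := Finset.mem_range.1 hi
  have hαi := hC.lt_Tr_of_lt_rho2 h0 hαβ hβ hi
  have hle : lamb C α β ≤ α := Finset.sup_le fun _ _ => csSup_le' fun _ hx => hx.2.le
  have hacc := hC.isAccOf_of_sSup_eq (hC.Tr_lt h0 hαβ hβ i) hαi h0
    (hsup ▸ le_antisymm hle (not_lt.1 hlamb))
  exact ⟨i, le_antisymm hi (rho2_le (Tr_succ_eq_of_mem hαi hacc.1)), hacc⟩

theorem IsCSeq.lastStep_eq_Tr (hC : IsCSeq κ C) (h0 : 0 < α) (hαβ : α ≤ β) (hβ : β < κ)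
    (hlamb : ¬lamb C α β < α) (hi : i + 1 = rho2 C α β) : lastStep C α β = Tr C α β i := by
  rw [lastStep, if_neg hlamb]
  refine IsLeast.csInf_eq ⟨⟨i, by omega, rfl⟩, ?_⟩
  rintro _ ⟨j, hj, rfl⟩
  exact (hC.Tr_strictAntiOn h0 hαβ hβ).antitoneOn
    (mem_Iic.2 (by omega)) (mem_Iic.2 (by omega)) (by omega)

end Walk

theorem lastStep_props_general (κ : Cardinal.{0})
    (C : Ordinal.{0} → Set Ordinal.{0}) (hC : IsCSeq κ.ord C)
    (α β : Ordinal) (h0 : 0 < α) (h1 : α < β) (h2 : β < κ.ord) :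
    lamb C (lastStep C α β) β < α ∧
    (lastStep C α β ≠ α → IsAccOf (C (lastStep C α β)) α) ∧
    trL C (lastStep C α β) β <+: trL C α β := by
  by_cases hlamb : lamb C α β < α
  · rw [lastStep, if_pos hlamb]
    exact ⟨hlamb, fun h => (h rfl).elim, List.prefix_refl _⟩
  · obtain ⟨i, hi, hacc⟩ := hC.exists_isAccOf_of_not_lamb_lt h0 h1.le h2 hlamb
    rw [hC.lastStep_eq_Tr h0 h1.le h2 hlamb hi]
    exact ⟨hC.lamb_Tr_lt h0 h1.le h2 (by omega), fun _ => hacc,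
      hC.trL_Tr_prefix h0 h1.le h2 (by omega)⟩

/-- Properties of `last(α,β)`: (1) `λ(last(α,β),β) < α`;
(2) if `last(α,β) ≠ α` then `α ∈ acc(C_{last(α,β)})`;
(3) `tr(last(α,β),β)` is an initial segment of `tr(α,β)`. -/
theorem lastStep_props (κ : Cardinal.{0}) (hreg : κ.IsRegular) (hκ : ℵ₀ < κ)
    (C : Ordinal.{0} → Set Ordinal.{0}) (hC : IsCSeq κ.ord C)
    (α β : Ordinal) (h0 : 0 < α) (h1 : α < β) (h2 : β < κ.ord) :
    lamb C (lastStep C α β) β < α ∧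
    (lastStep C α β ≠ α → IsAccOf (C (lastStep C α β)) α) ∧
    trL C (lastStep C α β) β <+: trL C α β :=
  lastStep_props_general κ C hC α β h0 h1 h2

end
end

section
/- Let κ be a regular uncountable cardinal and ⟨C_α | α < κ⟩ a C-sequence. If 0 < δ < β < κ and δ ∉ ⋃_{α<κ} acc(C_α), then λ(δ, β) < δ. -/
open Cardinal Ordinal Set

noncomputable section

/-! Since `δ` is not an accumulation point of `C_α`, and `C_α` is closed, every `C_α` with
`δ < α < κ` has a gap `(γ, δ)` below `δ`. So `sup (C_α ∩ δ) ≤ γ < δ`, and `C_α` (being unbounded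
in `α`) meets `[δ, α)`, which keeps the walk from `β` down to `δ` inside `[δ, β]`. Every term
of `λ(δ, β)` is therefore taken at some `α ∈ (δ, β]` and is below `δ`. -/

theorem sSup_inter_Iio_le_of_gap {α : Type*} [ConditionallyCompleteLinearOrderBot α]
    {s : Set α} {γ δ : α} (hgap : ∀ x ∈ s, γ < x → δ ≤ x) : sSup (s ∩ Iio δ) ≤ γ :=
  csSup_le' fun x hx => le_of_not_gt fun hγx => (hgap x hx.1 hγx).not_gt hx.2

namespace IsCSeq

variable {κ α γ δ : Ordinal.{0}} {C : Ordinal.{0} → Set Ordinal.{0}}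

theorem exists_gap_of_not_isAccOf (hC : IsCSeq κ C) (hα : α < κ) (hδ : 0 < δ) (hδα : δ < α)
    (hacc : ¬ IsAccOf (C α) δ) : ∃ γ < δ, ∀ x ∈ C α, γ < x → δ ≤ x := by
  by_contra! hcof
  exact hacc ⟨hC.2.1 α hα δ hδ hδα hcof, hδ, hcof⟩

theorem inter_Ici_nonempty_of_gap (hC : IsCSeq κ C) (hα : α < κ) (hδα : δ < α) (hγ : γ < δ)
    (hgap : ∀ x ∈ C α, γ < x → δ ≤ x) : (C α ∩ Ici δ).Nonempty := by
  by_contra hempty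
  have hbdd : ∀ x ∈ C α, x ≤ γ := fun x hx =>
    le_of_not_gt fun hγx => hempty ⟨x, hx, hgap x hx hγx⟩
  exact (hC.2.2 α hα γ hbdd δ hδα).not_gt hγ

end IsCSeq

theorem Tr_mem_Icc {C : Ordinal.{0} → Set Ordinal.{0}} {δ β : Ordinal.{0}} (hδβ : δ ≤ β)
    (hsub : ∀ α ∈ Ioc δ β, C α ⊆ Iio α) (hstep : ∀ α ∈ Ioc δ β, (C α ∩ Ici δ).Nonempty)
    (n : ℕ) : Tr C δ β n ∈ Icc δ β := by
  induction n with
  | zero => exact ⟨hδβ, le_rfl⟩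
  | succ n ih =>
    rw [Tr]
    split_ifs with hδn
    · have hmem := csInf_mem (hstep _ ⟨hδn, ih.2⟩)
      exact ⟨hmem.2, (hsub _ ⟨hδn, ih.2⟩ hmem.1).le.trans ih.2⟩
    · exact ⟨le_rfl, hδβ⟩

theorem lamb_lt_of_not_acc_general (κ : Cardinal.{0})
    (C : Ordinal.{0} → Set Ordinal.{0}) (hC : IsCSeq κ.ord C)
    (δ β : Ordinal) (h0 : 0 < δ) (h1 : δ < β) (h2 : β < κ.ord)
    (h3 : ∀ α < κ.ord, ¬ IsAccOf (C α) δ) :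
    lamb C δ β < δ := by
  have hgap : ∀ α ∈ Ioc δ β, ∃ γ < δ, ∀ x ∈ C α, γ < x → δ ≤ x := fun α hα =>
    hC.exists_gap_of_not_isAccOf (hα.2.trans_lt h2) h0 hα.1 (h3 α (hα.2.trans_lt h2))
  have htr : ∀ n, Tr C δ β n ∈ Icc δ β := by
    refine Tr_mem_Icc h1.le (fun α hα => hC.1 α (hα.2.trans_lt h2)) fun α hα => ?_
    obtain ⟨γ, hγ, hgapα⟩ := hgap α hα
    exact hC.inter_Ici_nonempty_of_gap (hα.2.trans_lt h2) hα.1 hγ hgapα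
  rw [lamb, Finset.sup_lt_iff (bot_lt_iff_ne_bot.2 h0.ne')]
  intro i hi
  have hδi : δ < Tr C δ β i :=
    (htr i).1.lt_of_ne' (Nat.notMem_of_lt_sInf (Finset.mem_range.1 hi))
  obtain ⟨γ, hγ, hgapi⟩ := hgap _ ⟨hδi, (htr i).2⟩
  exact (sSup_inter_Iio_le_of_gap hgapi).trans_lt hγ

/-- If `0 < δ < β < κ` and `δ ∉ ⋃_{α<κ} acc(C_α)`, then `λ(δ,β) < δ`. -/
theorem lamb_lt_of_not_acc (κ : Cardinal.{0}) (hreg : κ.IsRegular) (hκ : ℵ₀ < κ)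
    (C : Ordinal.{0} → Set Ordinal.{0}) (hC : IsCSeq κ.ord C)
    (δ β : Ordinal) (h0 : 0 < δ) (h1 : δ < β) (h2 : β < κ.ord)
    (h3 : ∀ α < κ.ord, ¬ IsAccOf (C α) δ) :
    lamb C δ β < δ :=
  lamb_lt_of_not_acc_general κ C hC δ β h0 h1 h2 h3

end
end

section
/- Let κ be a regular uncountable cardinal. A stationary subset Γ ⊆ κ is nonreflecting (i.e., there is no α < κ of uncountable cofinality with Γ ∩ α stationary in α) if and only if there exists a C-sequence ⟨C_α | α < κ⟩ over κ with acc(C_α) ∩ Γ = ∅ for all α < κ. -/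
open Cardinal Ordinal Set

noncomputable section

/-!
If `cf α > ω`, the accumulation points of any closed cofinal `C_α ⊆ α` form a club in `α`,
so a C-sequence avoiding `Γ` exhibits, at each such `α`, a club of `α` disjoint from `Γ`.
Conversely, take `C_α` to be such a club when `cf α > ω`, and otherwise a cofinal subset of
`α` of order type at most `ω`, which has no accumulation points at all.
-/

def IsCofinalBelow (s : Set Ordinal.{0}) (δ : Ordinal.{0}) : Prop :=
  ∀ γ < δ, ∃ x ∈ s, γ < x ∧ x < δ

def IsCSeqMember (α : Ordinal.{0}) (s : Set Ordinal.{0}) : Prop :=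
  s ⊆ Iio α ∧
  (∀ δ, 0 < δ → δ < α → IsCofinalBelow s δ → δ ∈ s) ∧
  (∀ γ : Ordinal, (∀ x ∈ s, x ≤ γ) → ∀ δ < α, δ ≤ γ)

theorem isCSeq_iff_forall_isCSeqMember {κ : Ordinal.{0}} {C : Ordinal.{0} → Set Ordinal.{0}} :
    IsCSeq κ C ↔ ∀ α < κ, IsCSeqMember α (C α) := by
  simp only [IsCSeq, IsCSeqMember, IsCofinalBelow, ← forall_and]

theorem not_isCofinalBelow_of_finite {s : Set Ordinal.{0}} {δ : Ordinal.{0}}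
    (hfin : (s ∩ Iio δ).Finite) (hδ : 0 < δ) : ¬ IsCofinalBelow s δ := by
  intro hcof
  obtain ⟨x, hxs, -, hxδ⟩ := hcof 0 hδ
  obtain ⟨m, ⟨-, hmδ⟩, hmax⟩ := exists_max_image _ id hfin ⟨x, hxs, hxδ⟩
  obtain ⟨y, hys, hmy, hyδ⟩ := hcof m hmδ
  exact (hmax y ⟨hys, hyδ⟩).not_gt hmy

theorem not_isAccOf_of_finite {s : Set Ordinal.{0}} {δ : Ordinal.{0}}
    (hfin : (s ∩ Iio δ).Finite) : ¬ IsAccOf s δ :=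
  fun h => not_isCofinalBelow_of_finite hfin h.2.1 h.2.2

theorem finite_range_inter_Iio {β : Type*} [Preorder β] {g : ℕ → β} (hg : Monotone g)
    {x : β} {n : ℕ} (hn : x ≤ g n) : (range g ∩ Iio x).Finite := by
  refine ((finite_Iio n).image g).subset ?_
  rintro _ ⟨⟨k, rfl⟩, hk⟩
  exact ⟨k, lt_of_not_ge fun hnk => lt_irrefl _ ((hg hnk).trans_lt (lt_of_lt_of_le hk hn)), rfl⟩

theorem isCSeqMember_range {α : Ordinal.{0}} {g : ℕ → Ordinal.{0}} (hg : Monotone g)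
    (hlt : ∀ n, g n < α) (hcof : ∀ γ < α, ∃ n, γ ≤ g n) :
    IsCSeqMember α (range g) ∧ ∀ δ, ¬ IsAccOf (range g) δ := by
  have hfin : ∀ x < α, (range g ∩ Iio x).Finite := fun x hx =>
    let ⟨_, hn⟩ := hcof x hx
    finite_range_inter_Iio hg hn
  refine ⟨⟨range_subset_iff.2 hlt, fun δ hδ hδα hδcof => ?_, fun γ hγ δ hδ => ?_⟩, ?_⟩
  · exact (not_isCofinalBelow_of_finite (hfin δ hδα) hδ hδcof).elim
  · obtain ⟨n, hn⟩ := hcof δ hδ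
    exact hn.trans (hγ _ ⟨n, rfl⟩)
  · rintro _ hδ
    obtain ⟨n, rfl⟩ := hδ.1
    exact not_isAccOf_of_finite (hfin _ (hlt n)) hδ

theorem exists_monotone_nat_cofinal {α : Ordinal.{0}} (hα : α ≠ 0) (hcof : α.cof ≤ ℵ₀) :
    ∃ g : ℕ → Ordinal.{0}, Monotone g ∧ (∀ n, g n < α) ∧ ∀ γ < α, ∃ n, γ ≤ g n := by
  rcases zero_or_succ_or_isSuccLimit α with h0 | ⟨a, rfl⟩ | hlim
  · exact absurd h0 hα
  · exact ⟨fun _ => a, monotone_const, fun _ => Order.lt_succ a,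
      fun γ hγ => ⟨0, Order.lt_succ_iff.1 hγ⟩⟩
  · have hω : α.cof.ord = ω := by
      rw [le_antisymm hcof (aleph0_le_cof_iff.2 (one_lt_cof_iff.2 hlim)), ord_aleph0]
    obtain ⟨f, hf⟩ := exists_isFundamentalSeq hω
    refine ⟨fun n => f ⟨n, natCast_lt_omega0 n⟩, fun m n hmn => ?_, fun n => (f _).2,
      fun γ hγ => ?_⟩
    · exact hf.strictMono.monotone (show (m : Ordinal) ≤ n by exact_mod_cast hmn)
    · obtain ⟨_, ⟨⟨i, hi⟩, rfl⟩, hγi⟩ := hf.isCofinal_range ⟨γ, hγ⟩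
      obtain ⟨n, rfl⟩ := lt_omega0.1 hi
      exact ⟨n, hγi⟩

theorem exists_isCSeqMember_forall_not_isAccOf {α : Ordinal.{0}} (hcof : α.cof ≤ ℵ₀) :
    ∃ s, IsCSeqMember α s ∧ ∀ δ, ¬ IsAccOf s δ := by
  rcases eq_or_ne α 0 with rfl | hα
  · exact ⟨∅, ⟨empty_subset _, fun δ _ hδ => (not_lt_zero hδ).elim,
      fun _ _ δ hδ => (not_lt_zero hδ).elim⟩, fun _ h => h.1⟩
  · obtain ⟨g, hg, hlt, hcof⟩ := exists_monotone_nat_cofinal hα hcof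
    exact ⟨range g, isCSeqMember_range hg hlt hcof⟩

theorem ClubIn.isCSeqMember {D : Set Ordinal.{0}} {α : Ordinal.{0}} (hD : ClubIn D α) :
    IsCSeqMember α D :=
  ⟨hD.1, fun δ hδ hδα => hD.2.2 δ hδα hδ, fun _ hγ δ hδ =>
    let ⟨β, hβ, hδβ⟩ := hD.2.1 δ hδ
    hδβ.trans (hγ β hβ)⟩

theorem exists_isCSeqMember_avoiding (Γ : Set Ordinal.{0}) {α : Ordinal.{0}}
    (hα : ℵ₀ < α.cof → ¬ StatIn (Γ ∩ Iio α) α) :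
    ∃ s, IsCSeqMember α s ∧ ∀ δ ∈ Γ, ¬ IsAccOf s δ := by
  by_cases hcof : ℵ₀ < α.cof
  · obtain ⟨D, hD, hΓD⟩ : ∃ D, ClubIn D α ∧ Γ ∩ Iio α ∩ D = ∅ := by
      by_contra! h
      exact hα hcof ⟨inter_subset_right, h⟩
    exact ⟨D, hD.isCSeqMember, fun δ hδΓ hδ => hΓD.subset ⟨⟨hδΓ, hD.1 hδ.1⟩, hδ.1⟩⟩
  · obtain ⟨s, hs, hacc⟩ := exists_isCSeqMember_forall_not_isAccOf (not_lt.1 hcof)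
    exact ⟨s, hs, fun δ _ => hacc δ⟩

theorem isCofinalBelow_iSup {s : Set Ordinal.{0}} {g : ℕ → Ordinal.{0}} (hg : StrictMono g)
    (hgs : ∀ n, g n ∈ s) : IsCofinalBelow s (⨆ n, g n) := fun _ hγ =>
  let ⟨n, hn⟩ := Ordinal.lt_iSup_iff.1 hγ
  ⟨g (n + 1), hgs _, hn.trans (hg n.lt_succ_self),
    (hg (n + 1).lt_succ_self).trans_le (Ordinal.le_iSup g _)⟩

namespace IsCSeqMember

variable {α : Ordinal.{0}} {s : Set Ordinal.{0}}

theorem exists_gt (hs : IsCSeqMember α s) (hα : Order.IsSuccLimit α) {γ : Ordinal.{0}}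
    (hγ : γ < α) : ∃ x ∈ s, γ < x := by
  by_contra! h
  exact (Order.lt_succ γ).not_ge (hs.2.2 γ h _ (hα.succ_lt hγ))

theorem exists_isAccOf_ge (hs : IsCSeqMember α s) (hα : ℵ₀ < α.cof) {γ : Ordinal.{0}}
    (hγ : γ < α) : ∃ δ, IsAccOf s δ ∧ γ ≤ δ := by
  choose! next hnext_mem hnext_gt using
    fun x (hx : x < α) => hs.exists_gt (one_lt_cof_iff.1 (one_lt_aleph0.trans hα)) hx
  let g : ℕ → Ordinal.{0} := fun n => next^[n] (next γ)
  have hg_succ : ∀ n, g (n + 1) = next (g n) := fun n => Function.iterate_succ_apply' ..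
  have hg : ∀ n, g n ∈ s ∧ g n < α := by
    intro n
    induction n with
    | zero => exact ⟨hnext_mem γ hγ, hs.1 (hnext_mem γ hγ)⟩
    | succ n ih => rw [hg_succ]; exact ⟨hnext_mem _ ih.2, hs.1 (hnext_mem _ ih.2)⟩
  have hmono : StrictMono g :=
    strictMono_nat_of_lt_succ fun n => hg_succ n ▸ hnext_gt _ (hg n).2
  have hγδ : γ < ⨆ n, g n := (hnext_gt γ hγ).trans_le (Ordinal.le_iSup g 0)
  have hδα : ⨆ n, g n < α := iSup_lt_of_lt_cof (by simpa using hα) fun n => (hg n).2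
  have hcof := isCofinalBelow_iSup hmono fun n => (hg n).1
  have hδ : 0 < ⨆ n, g n := zero_le.trans_lt hγδ
  exact ⟨_, ⟨hs.2.1 _ hδ hδα hcof, hδ, hcof⟩, hγδ.le⟩

theorem clubIn_setOf_isAccOf (hs : IsCSeqMember α s) (hα : ℵ₀ < α.cof) :
    ClubIn {δ | IsAccOf s δ} α := by
  refine ⟨fun δ hδ => hs.1 hδ.1, fun γ hγ => hs.exists_isAccOf_ge hα hγ,
    fun δ hδα hδ hacc => ?_⟩
  have hcof : IsCofinalBelow s δ := fun γ hγ =>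
    let ⟨x, hx, hγx, hxδ⟩ := hacc γ hγ
    let ⟨y, hy, hγy, hyx⟩ := hx.2.2 γ hγx
    ⟨y, hy, hγy, hyx.trans hxδ⟩
  exact ⟨hs.2.1 δ hδ hδα hcof, hδ, hcof⟩

end IsCSeqMember

theorem nonreflecting_iff_avoiding_general (κ : Cardinal.{0}) (Γ : Set Ordinal) :
    (∀ α < κ.ord, ℵ₀ < α.cof → ¬ StatIn (Γ ∩ Set.Iio α) α) ↔
    ∃ C : Ordinal.{0} → Set Ordinal.{0}, IsCSeq κ.ord C ∧
      ∀ α < κ.ord, ∀ δ ∈ Γ, ¬ IsAccOf (C α) δ := by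
  constructor
  · intro hnr
    choose! C hC hCΓ using fun α (hα : α < κ.ord) => exists_isCSeqMember_avoiding Γ (hnr α hα)
    exact ⟨C, isCSeq_iff_forall_isCSeqMember.2 hC, hCΓ⟩
  · rintro ⟨C, hC, hCΓ⟩ α hα hcof hstat
    obtain ⟨δ, ⟨hδΓ, -⟩, hδ⟩ :=
      hstat.2 _ ((isCSeq_iff_forall_isCSeqMember.1 hC α hα).clubIn_setOf_isAccOf hcof)
    exact hCΓ α hα δ hδΓ hδ

/-- A stationary `Γ ⊆ κ` is nonreflecting iff there is a C-sequence over `κ`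
avoiding `Γ`. -/
theorem nonreflecting_iff_avoiding (κ : Cardinal.{0}) (hreg : κ.IsRegular)
    (hκ : ℵ₀ < κ) (Γ : Set Ordinal) (hΓ : StatIn Γ κ.ord) :
    (∀ α < κ.ord, ℵ₀ < α.cof → ¬ StatIn (Γ ∩ Set.Iio α) α) ↔
    ∃ C : Ordinal.{0} → Set Ordinal.{0}, IsCSeq κ.ord C ∧
      ∀ α < κ.ord, ∀ δ ∈ Γ, ¬ IsAccOf (C α) δ :=
  nonreflecting_iff_avoiding_general κ Γ

end
end

section
/- Suppose κ is a regular uncountable cardinal and 𝐭 : [κ]² → [κ]³ witnesses Pℓ₁(κ, 1, χ). Then there exists a coloring d₁ : [κ]² → κ which is good for χ: for every σ < χ and every pairwise disjoint family ℬ ⊆ [κ]^σ of size κ, there are a stationary set Δ ⊆ κ and an ordinal η < κ such that, for every δ ∈ Δ, there exists b ∈ ℬ with min(b) > max{η, δ} and d₁ constantly equal to δ on {η} × b. -/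
open Cardinal Ordinal Set

noncomputable section

/-!
Colour `d₁(η, β)` by the third coordinate `β*` of `𝐭(η, β)`. Given `ℬ`, keep only the members
whose minimum is not a limit of minima, and let `D` be the club of those limits. Fix `α*` in the
stationary set `S` that `Pℓ₁` yields for the thinned family. For `δ ∈ S ∩ D` above `α*`, `Pℓ₁`
with `τ* = 0` gives `a < b` with `𝐭 ≡ (0, α*, δ)` on `a × b`; then `a` lies below `δ`, and `b`
lies strictly above `δ`, because `min b ≥ δ` while `min b ∉ D ∋ δ`. Pressing down `δ ↦ η ∈ a`
(Fodor) gives the stationary `Δ` with a common `η`.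
-/

def IsUnboundedIn (A : Set Ordinal.{0}) (K : Ordinal.{0}) : Prop :=
  A ⊆ Set.Iio K ∧ ∀ α < K, ∃ β ∈ A, α ≤ β

def accPts (A : Set Ordinal.{0}) (K : Ordinal.{0}) : Set Ordinal.{0} :=
  {δ | δ < K ∧ 0 < δ ∧ ∀ γ < δ, ∃ x ∈ A, γ < x ∧ x < δ}

section

variable {κ : Cardinal.{0}} {K : Ordinal.{0}} {A D E S : Set Ordinal.{0}}

theorem ClubIn.isUnboundedIn (hD : ClubIn D K) : IsUnboundedIn D K :=
  ⟨hD.1, hD.2.1⟩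

theorem IsUnboundedIn.exists_gt (hK : Order.IsSuccLimit K) (hA : IsUnboundedIn A K)
    {α : Ordinal.{0}} (hα : α < K) : ∃ x ∈ A, α < x ∧ x < K := by
  obtain ⟨x, hxA, hx⟩ := hA.2 (Order.succ α) (hK.succ_lt hα)
  exact ⟨x, hxA, Order.succ_le_iff.1 hx, hA.1 hxA⟩

theorem isUnboundedIn_of_lift_le_mk (hA : A ⊆ Set.Iio κ.ord) (h : Cardinal.lift.{1} κ ≤ #A) :
    IsUnboundedIn A κ.ord := by
  refine ⟨hA, fun α hα => ?_⟩
  by_contra! hbdd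
  have : #A ≤ Cardinal.lift.{1} α.card :=
    (Cardinal.mk_le_mk_of_subset hbdd).trans (Cardinal.mk_Iio_ordinal α).le
  exact (h.trans this).not_gt (Cardinal.lift_lt.2 (Cardinal.lt_ord.1 hα))

theorem IsUnboundedIn.lift_le_mk (hreg : κ.IsRegular) (hA : IsUnboundedIn A κ.ord) :
    Cardinal.lift.{1} κ ≤ #A := by
  have hcof : IsCofinal (Subtype.val ⁻¹' A : Set (Set.Iio κ.ord)) := by
    intro x
    obtain ⟨β, hβA, hxβ⟩ := hA.2 x.1 x.2
    exact ⟨⟨β, hA.1 hβA⟩, hβA, hxβ⟩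
  calc Cardinal.lift.{1} κ = Order.cof (Set.Iio κ.ord) := by
        rw [Ordinal.cof_Iio, ← Ordinal.lift_cof, hreg.cof_ord]
    _ ≤ #(Subtype.val ⁻¹' A : Set (Set.Iio κ.ord)) := Order.cof_le hcof
    _ ≤ #A := Cardinal.mk_preimage_of_injective _ _ Subtype.val_injective

theorem exists_lt_ord_forall_le (hreg : κ.IsRegular) {x : Ordinal.{0}} (hx : x < κ.ord)
    {g : Ordinal.{0} → Ordinal.{0}} (hg : ∀ β < x, g β < κ.ord) :
    ∃ γ < κ.ord, ∀ β < x, g β ≤ γ := by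
  have himg : g '' Set.Iio x ⊆ Set.Iio κ.ord := by
    rintro _ ⟨β, hβ, rfl⟩
    exact hg β hβ
  refine ⟨sSup (g '' Set.Iio x), Ordinal.sSup_lt_of_lt_cof ?_ himg,
    fun β hβ => le_csSup ⟨κ.ord, fun y hy => (himg hy).le⟩ ⟨β, hβ, rfl⟩⟩
  calc #(g '' Set.Iio x) ≤ #(Set.Iio x) := Cardinal.mk_image_le
    _ = Cardinal.lift.{1} x.card := Cardinal.mk_Iio_ordinal x
    _ < Cardinal.lift.{1} κ := Cardinal.lift_lt.2 (Cardinal.lt_ord.1 hx)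
    _ = (Ordinal.lift.{1} κ.ord).cof := by rw [← Ordinal.lift_cof, hreg.cof_ord]

theorem exists_closure_point (hreg : κ.IsRegular) (hκ : ℵ₀ < κ)
    {P : Ordinal.{0} → Ordinal.{0} → Prop} (hP : ∀ β < κ.ord, ∃ γ < κ.ord, P β γ)
    {α : Ordinal.{0}} (hα : α < κ.ord) :
    ∃ δ, α < δ ∧ δ < κ.ord ∧ ∀ β < δ, ∃ γ < δ, P β γ := by
  choose! g hg using hP
  choose! bound hbound using fun x (hx : x < κ.ord) =>
    exists_lt_ord_forall_le hreg hx fun β hβ => (hg β (hβ.trans hx)).1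
  set H : Ordinal.{0} → Ordinal.{0} := fun x => max (Order.succ x) (bound x)
  have hH : ∀ x < κ.ord, H x < κ.ord := fun x hx =>
    max_lt ((Cardinal.isSuccLimit_ord hreg.aleph0_le).succ_lt hx) (hbound x hx).1
  have hlt_H : ∀ x, x < H x := fun x => (Order.lt_succ x).trans_le (le_max_left _ _)
  have hδ := Cardinal.nfp_lt_ord_of_isRegular hreg hκ.ne' hH hα
  refine ⟨Ordinal.nfp H α, (hlt_H α).trans_le (Ordinal.iterate_le_nfp H α 1), hδ,
    fun β hβ => ?_⟩
  obtain ⟨n, hn⟩ := Ordinal.lt_nfp_iff.1 hβ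
  have hnK : H^[n] α < κ.ord := (Ordinal.iterate_le_nfp H α n).trans_lt hδ
  refine ⟨g β, ?_, (hg β (hn.trans hnK)).2⟩
  calc g β ≤ H (H^[n] α) := ((hbound _ hnK).2 β hn).trans (le_max_right _ _)
    _ < H (H (H^[n] α)) := hlt_H _
    _ = H^[n + 2] α := by simp only [Function.iterate_succ_apply']
    _ ≤ Ordinal.nfp H α := Ordinal.iterate_le_nfp H α (n + 2)

theorem clubIn_Ioo (hK : Order.IsSuccLimit K) {ξ : Ordinal.{0}} (hξ : ξ < K) :
    ClubIn (Set.Ioo ξ K) K := by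
  refine ⟨fun x hx => hx.2, fun α hα => ?_, fun δ hδK hδ0 hδ => ?_⟩
  · exact ⟨max (Order.succ ξ) α, ⟨(Order.lt_succ ξ).trans_le (le_max_left _ _),
      max_lt (hK.succ_lt hξ) hα⟩, le_max_right _ _⟩
  · obtain ⟨x, hx, -, hxδ⟩ := hδ 0 hδ0
    exact ⟨hx.1.trans hxδ, hδK⟩

theorem clubIn_accPts (hreg : κ.IsRegular) (hκ : ℵ₀ < κ) (hA : IsUnboundedIn A κ.ord) :
    ClubIn (accPts A κ.ord) κ.ord := by
  have hK := Cardinal.isSuccLimit_ord hreg.aleph0_le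
  refine ⟨fun δ hδ => hδ.1, fun α hα => ?_,
    fun δ hδK hδ hacc => ⟨hδK, hδ, fun γ hγ => ?_⟩⟩
  · have hP : ∀ β < κ.ord, ∃ x < κ.ord, x ∈ A ∧ β < x := fun β hβ =>
      (hA.exists_gt hK hβ).imp fun x hx => ⟨hx.2.2, hx.1, hx.2.1⟩
    obtain ⟨δ, hαδ, hδK, hδ⟩ := exists_closure_point hreg hκ hP hα
    refine ⟨δ, ⟨hδK, hαδ.pos, fun γ hγ => ?_⟩, hαδ.le⟩
    obtain ⟨x, hxδ, hxA, hγx⟩ := hδ γ hγ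
    exact ⟨x, hxA, hγx, hxδ⟩
  · obtain ⟨x, hx, hγx, hxδ⟩ := hacc γ hγ
    obtain ⟨y, hyA, hγy, hyx⟩ := hx.2.2 γ hγx
    exact ⟨y, hyA, hγy, hyx.trans hxδ⟩

theorem ClubIn.inter (hreg : κ.IsRegular) (hκ : ℵ₀ < κ) (hD : ClubIn D κ.ord)
    (hE : ClubIn E κ.ord) : ClubIn (D ∩ E) κ.ord := by
  have hK := Cardinal.isSuccLimit_ord hreg.aleph0_le
  refine ⟨fun x hx => hD.1 hx.1, fun α hα => ?_, fun δ hδK hδ hacc => ⟨?_, ?_⟩⟩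
  · have hP : ∀ β < κ.ord, ∃ γ < κ.ord,
        (∃ x ∈ D, β < x ∧ x ≤ γ) ∧ ∃ y ∈ E, β < y ∧ y ≤ γ := fun β hβ => by
      obtain ⟨x, hxD, hβx, hxK⟩ := hD.isUnboundedIn.exists_gt hK hβ
      obtain ⟨y, hyE, hβy, hyK⟩ := hE.isUnboundedIn.exists_gt hK hβ
      exact ⟨max x y, max_lt hxK hyK, ⟨x, hxD, hβx, le_max_left _ _⟩,
        ⟨y, hyE, hβy, le_max_right _ _⟩⟩
    obtain ⟨δ, hαδ, hδK, hδ⟩ := exists_closure_point hreg hκ hP hα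
    have hδ0 : 0 < δ := hαδ.pos
    refine ⟨δ, ⟨hD.2.2 δ hδK hδ0 fun β hβ => ?_, hE.2.2 δ hδK hδ0 fun β hβ => ?_⟩,
      hαδ.le⟩
    · obtain ⟨γ, hγδ, ⟨x, hxD, hβx, hxγ⟩, -⟩ := hδ β hβ
      exact ⟨x, hxD, hβx, hxγ.trans_lt hγδ⟩
    · obtain ⟨γ, hγδ, -, ⟨y, hyE, hβy, hyγ⟩⟩ := hδ β hβ
      exact ⟨y, hyE, hβy, hyγ.trans_lt hγδ⟩
  · exact hD.2.2 δ hδK hδ fun γ hγ => (hacc γ hγ).imp fun x hx => ⟨hx.1.1, hx.2⟩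
  · exact hE.2.2 δ hδK hδ fun γ hγ => (hacc γ hγ).imp fun x hx => ⟨hx.1.2, hx.2⟩

theorem clubIn_diagInter (hreg : κ.IsRegular) (hκ : ℵ₀ < κ)
    {F : Ordinal.{0} → Set Ordinal.{0}} (hF : ∀ ξ < κ.ord, ClubIn (F ξ) κ.ord) :
    ClubIn {δ | δ < κ.ord ∧ ∀ ξ < δ, δ ∈ F ξ} κ.ord := by
  have hK := Cardinal.isSuccLimit_ord hreg.aleph0_le
  refine ⟨fun δ hδ => hδ.1, fun α hα => ?_,
    fun δ hδK hδ hacc => ⟨hδK, fun ξ hξ => ?_⟩⟩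
  · have hP : ∀ β < κ.ord, ∃ γ < κ.ord,
        ∀ ξ ≤ β, ∃ y ∈ F ξ, β < y ∧ y ≤ γ := fun β hβ => by
      choose! y hy using fun ξ (hξ : ξ < Order.succ β) =>
        (hF ξ ((Order.lt_succ_iff.1 hξ).trans_lt hβ)).isUnboundedIn.exists_gt hK hβ
      obtain ⟨γ, hγK, hγ⟩ :=
        exists_lt_ord_forall_le hreg (hK.succ_lt hβ) fun ξ hξ => (hy ξ hξ).2.2
      exact ⟨γ, hγK, fun ξ hξ => ⟨y ξ, (hy ξ (Order.lt_succ_iff.2 hξ)).1,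
        (hy ξ (Order.lt_succ_iff.2 hξ)).2.1, hγ ξ (Order.lt_succ_iff.2 hξ)⟩⟩
    obtain ⟨δ, hαδ, hδK, hδ⟩ := exists_closure_point hreg hκ hP hα
    refine ⟨δ, ⟨hδK, fun ξ hξ => (hF ξ (hξ.trans hδK)).2.2 δ hδK hαδ.pos
      fun β hβ => ?_⟩, hαδ.le⟩
    obtain ⟨γ, hγδ, hγ⟩ := hδ (max ξ β) (max_lt hξ hβ)
    obtain ⟨y, hyF, hy, hyγ⟩ := hγ ξ (le_max_left _ _)
    exact ⟨y, hyF, (le_max_right _ _).trans_lt hy, hyγ.trans_lt hγδ⟩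
  · refine (hF ξ (hξ.trans hδK)).2.2 δ hδK hδ fun γ hγ => ?_
    obtain ⟨x, hx, hγx, hxδ⟩ := hacc (max ξ γ) (max_lt hξ hγ)
    exact ⟨x, hx.2 ξ ((le_max_left _ _).trans_lt hγx), (le_max_right _ _).trans_lt hγx,
      hxδ⟩

theorem StatIn.inter_clubIn (hreg : κ.IsRegular) (hκ : ℵ₀ < κ) (hS : StatIn S κ.ord)
    (hD : ClubIn D κ.ord) : StatIn (S ∩ D) κ.ord := by
  refine ⟨fun x hx => hS.1 hx.1, fun E hE => ?_⟩
  obtain ⟨x, hxS, hxD, hxE⟩ := hS.2 _ (hD.inter hreg hκ hE)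
  exact ⟨x, ⟨hxS, hxD⟩, hxE⟩

theorem StatIn.pressing_down (hreg : κ.IsRegular) (hκ : ℵ₀ < κ) (hS : StatIn S κ.ord)
    {P : Ordinal.{0} → Ordinal.{0} → Prop} (hP : ∀ δ ∈ S, ∃ η < δ, P η δ) :
    ∃ η < κ.ord, StatIn {δ | δ ∈ S ∧ P η δ} κ.ord := by
  by_contra! h
  have hE : ∀ η < κ.ord, ∃ E, ClubIn E κ.ord ∧ {δ | δ ∈ S ∧ P η δ} ∩ E = ∅ := fun η hη => by
    have h' := h η hη
    simp only [StatIn, not_and, not_forall, Set.not_nonempty_iff_eq_empty, exists_prop] at h'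
    exact h' fun δ hδ => hS.1 hδ.1
  choose! E hE using hE
  obtain ⟨δ, hδS, hδK, hδE⟩ := hS.2 _ (clubIn_diagInter hreg hκ fun η hη => (hE η hη).1)
  obtain ⟨η, hηδ, hPη⟩ := hP δ hδS
  have hmem : δ ∈ {δ | δ ∈ S ∧ P η δ} ∩ E η := ⟨⟨hδS, hPη⟩, hδE η hηδ⟩
  rw [(hE η (hηδ.trans hδK)).2] at hmem
  exact hmem

theorem IsFamily.mono {σ : Ordinal.{0}} {F F' : Set (Set Ordinal.{0})} (hF : IsFamily K σ F)
    (h : F' ⊆ F) : IsFamily K σ F' :=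
  ⟨fun a ha => hF.1 a (h ha), hF.2.subset h⟩

theorem IsFamily.nonempty {σ : Ordinal.{0}} {F : Set (Set Ordinal.{0})} (hF : IsFamily K σ F)
    (hcard : 1 < #F) {a : Set Ordinal.{0}} (ha : a ∈ F) : a.Nonempty := by
  by_contra! h
  have hσ : Ordinal.lift.{1} σ = 0 := by
    rw [← (hF.1 a ha).2, otp, Ordinal.type_eq_zero_iff_isEmpty, h]
    infer_instance
  have hsub : F ⊆ {∅} := fun b hb => by
    have hb0 := (hF.1 b hb).2
    rw [hσ, otp, Ordinal.type_eq_zero_iff_isEmpty, Set.isEmpty_coe_sort] at hb0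
    exact hb0
  exact hcard.not_ge ((Cardinal.mk_le_mk_of_subset hsub).trans (by simp))

theorem IsFamily.injOn_sInf {σ : Ordinal.{0}} {F : Set (Set Ordinal.{0})} (hF : IsFamily K σ F)
    (hne : ∀ a ∈ F, a.Nonempty) : Set.InjOn sInf F := fun a ha b hb hab =>
  hF.2.elim_set ha hb _ (csInf_mem (hne a ha)) (hab ▸ csInf_mem (hne b hb))

theorem IsUnboundedIn.diff_accPts (hK : Order.IsSuccLimit K) (hA : IsUnboundedIn A K) :
    IsUnboundedIn (A \ accPts A K) K := by
  refine ⟨fun x hx => hA.1 hx.1, fun α hα => ?_⟩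
  have hne : (A ∩ Set.Ioi α).Nonempty :=
    (hA.exists_gt hK hα).imp fun x hx => ⟨hx.1, hx.2.1⟩
  obtain ⟨hxA, hαx⟩ := csInf_mem hne
  refine ⟨sInf (A ∩ Set.Ioi α), ⟨hxA, fun hacc => ?_⟩, hαx.le⟩
  obtain ⟨y, hyA, hαy, hyx⟩ := hacc.2.2 α hαx
  exact (csInf_le' (s := A ∩ Set.Ioi α) ⟨hyA, hαy⟩).not_gt hyx

/-- The least minimum above any `α` is not a limit of minima, so discarding the members whose
minimum is such a limit leaves `κ` many. -/
theorem exists_subfamily_sInf_not_mem_clubIn (hreg : κ.IsRegular) (hκ : ℵ₀ < κ)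
    {σ : Ordinal.{0}} {B : Set (Set Ordinal.{0})} (hB : IsFamily κ.ord σ B)
    (hne : ∀ b ∈ B, b.Nonempty) (hcard : #B = Cardinal.lift.{1} κ) :
    ∃ B' ⊆ B, #B' = Cardinal.lift.{1} κ ∧ ∃ D, ClubIn D κ.ord ∧ ∀ b ∈ B', sInf b ∉ D := by
  have hM : IsUnboundedIn (sInf '' B) κ.ord := by
    refine isUnboundedIn_of_lift_le_mk ?_ ?_
    · rintro _ ⟨b, hb, rfl⟩
      exact (hB.1 b hb).1 (csInf_mem (hne b hb))
    · rw [Cardinal.mk_image_eq_of_injOn _ _ (hB.injOn_sInf hne), hcard]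
  set D := accPts (sInf '' B) κ.ord
  refine ⟨{b ∈ B | sInf b ∉ D}, fun b hb => hb.1, le_antisymm ?_ ?_, D,
    clubIn_accPts hreg hκ hM, fun b hb => hb.2⟩
  · exact hcard ▸ Cardinal.mk_le_mk_of_subset (Set.sep_subset _ _)
  · calc Cardinal.lift.{1} κ ≤ #↥(sInf '' B \ D) :=
          (hM.diff_accPts (Cardinal.isSuccLimit_ord hreg.aleph0_le)).lift_le_mk hreg
      _ ≤ #↥(sInf '' {b ∈ B | sInf b ∉ D}) := by
          refine Cardinal.mk_le_mk_of_subset ?_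
          rintro _ ⟨⟨b, hb, rfl⟩, hbD⟩
          exact ⟨b, ⟨hb, hbD⟩, rfl⟩
      _ ≤ #↥{b ∈ B | sInf b ∉ D} := Cardinal.mk_image_le

end

theorem forall_lt_and_le_of_snd_snd_eq {K δ : Ordinal.{0}}
    {t : Ordinal.{0} → Ordinal.{0} → Ordinal.{0} × Ordinal.{0} × Ordinal.{0}}
    (ht : ∀ α β, α < β → β < K → α < (t α β).2.2 ∧ (t α β).2.2 ≤ β) {a b : Set Ordinal.{0}}
    (hbK : b ⊆ Set.Iio K) (ha : a.Nonempty) (hb : b.Nonempty) (hab : SetLT a b)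
    (hconst : ∀ α ∈ a, ∀ β ∈ b, (t α β).2.2 = δ) : (∀ α ∈ a, α < δ) ∧ ∀ β ∈ b, δ ≤ β := by
  obtain ⟨α₀, hα₀⟩ := ha
  obtain ⟨β₀, hβ₀⟩ := hb
  refine ⟨fun α hα => ?_, fun β hβ => ?_⟩
  · simpa [hconst α hα β₀ hβ₀] using (ht α β₀ (hab α hα β₀ hβ₀) (hbK hβ₀)).1
  · simpa [hconst α₀ hα₀ β hβ] using (ht α₀ β (hab α₀ hα₀ β hβ) (hbK hβ)).2

/-- From a witness to `Pℓ₁(κ, 1, χ)` one obtains a coloring `d₁ : [κ]² → κ`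
which is good for `χ`. -/
theorem good_coloring_of_Pl1 (κ χ : Cardinal.{0}) (hreg : κ.IsRegular)
    (hκ : ℵ₀ < κ) (h : Pl1 κ 1 χ) :
    ∃ d₁ : Ordinal.{0} → Ordinal.{0} → Ordinal.{0},
      ∀ σ : Ordinal, σ < χ.ord → ∀ B : Set (Set Ordinal),
        IsFamily κ.ord σ B → #B = Cardinal.lift.{1} κ →
        ∃ Δ : Set Ordinal, StatIn Δ κ.ord ∧ ∃ η < κ.ord,
          ∀ δ ∈ Δ, ∃ b ∈ B, (∀ β ∈ b, max η δ < β) ∧ ∀ β ∈ b, d₁ η β = δ := by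
  obtain ⟨t, ht_le, ht⟩ := h
  have hK := Cardinal.isSuccLimit_ord hreg.aleph0_le
  refine ⟨fun η β => (t η β).2.2, fun σ hσ B hB hBcard => ?_⟩
  have hne : ∀ b ∈ B, b.Nonempty := fun b hb => hB.nonempty (hBcard ▸
    Cardinal.one_lt_aleph0.trans_le (Cardinal.aleph0_le_lift.2 hreg.aleph0_le)) hb
  obtain ⟨B', hB'B, hB'card, D, hD, hB'D⟩ :=
    exists_subfamily_sInf_not_mem_clubIn hreg hκ hB hne hBcard
  obtain ⟨S, hS, hSt⟩ := ht σ hσ B' (hB.mono hB'B) hB'card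
  obtain ⟨α₀, hα₀S, hα₀, -⟩ := hS.2 _ (clubIn_Ioo hK hK.pos)
  have hT := hS.inter_clubIn hreg hκ (hD.inter hreg hκ (clubIn_Ioo hK (hS.1 hα₀S)))
  have hpair : ∀ δ ∈ S ∩ (D ∩ Set.Ioo α₀ κ.ord), ∃ η < δ,
      ∃ b ∈ B, (∀ β ∈ b, max η δ < β) ∧ ∀ β ∈ b, (t η β).2.2 = δ := by
    rintro δ ⟨hδS, hδD, hα₀δ, -⟩
    obtain ⟨a, ha, b, hb, hab, hconst⟩ := hSt α₀ hα₀S δ hδS hα₀δ 0 (by simp) hα₀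
    obtain ⟨hlt, hle⟩ := forall_lt_and_le_of_snd_snd_eq (δ := δ)
      (fun α β hαβ hβ => (ht_le α β hαβ hβ).2.2) (hB.1 b (hB'B hb)).1 (hne a (hB'B ha))
      (hne b (hB'B hb)) hab fun α hα β hβ => by rw [hconst α hα β hβ]
    obtain ⟨η, hη⟩ := hne a (hB'B ha)
    have hδb : δ ∉ b := fun hδb => hB'D b hb (IsLeast.csInf_eq ⟨hδb, hle⟩ ▸ hδD)
    refine ⟨η, hlt η hη, b, hB'B hb, fun β hβ => max_lt (hab η hη β hβ) ?_,
      fun β hβ => by rw [hconst η hη β hβ]⟩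
    exact (hle β hβ).lt_of_ne fun hδβ => hδb (hδβ ▸ hβ)
  obtain ⟨η, hηK, hΔ⟩ := hT.pressing_down hreg hκ hpair
  exact ⟨_, hΔ, η, hηK, fun δ hδ => hδ.2⟩

end
end
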